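/- In the five-state symmetric protocol of Algorithm 3, if a reachable configuration C (from the all-r^ω₀ configuration on n agents) satisfies #token = 0 with n even, then #red = #blue = n/2; if it satisfies #token = 1 with n odd, then #red − #blue = 1. -/

import Mathlib

/-- States of the five-state symmetric protocol: r^ω₀, r^ω₁, b^ω, r, b. -/
inductive St : Type
  | rw0 | rw1 | bw | r | b
deriving DecidableEq

/-- Deterministic transition function of Algorithm 3 (with symmetric variants). -/
def delta : St → St → St × St
  | .rw0, .rw0 => (.rw1, .rw1)
  | .rw1, .rw1 => (.rw0, .rw0)
  | .rw0, .rw1 => (.r, .b)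
  | .rw1, .rw0 => (.b, .r)
  | .rw0, .r   => (.r, .rw0)
  | .r,  .rw0  => (.rw0, .r)
  | .rw1, .r   => (.r, .rw0)
  | .r,  .rw1  => (.rw0, .r)
  | .bw, .b    => (.b, .bw)
  | .b,  .bw   => (.bw, .b)
  | .rw0, .b   => (.r, .bw)
  | .b,  .rw0  => (.bw, .r)
  | .rw1, .b   => (.r, .bw)
  | .b,  .rw1  => (.bw, .r)
  | .bw, .r    => (.b, .rw0)
  | .r,  .bw   => (.rw0, .b)
  | .rw0, .bw  => (.b, .b)
  | .bw, .rw0  => (.b, .b)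
  | .rw1, .bw  => (.b, .b)
  | .bw, .rw1  => (.b, .b)
  | p, q       => (p, q)

/-- One step: apply the rule to an ordered pair of distinct agents. -/
def Step {n : ℕ} (C C' : Fin n → St) : Prop :=
  ∃ i j : Fin n, i ≠ j ∧
    C' = Function.update (Function.update C i (delta (C i) (C j)).1) j
          (delta (C i) (C j)).2

/-- Number of agents in state `s`. -/
def cnt {n : ℕ} (C : Fin n → St) (s : St) : ℕ :=
  (Finset.univ.filter fun a => C a = s).card

/-- Number of token-holding agents (state r^ω₀, r^ω₁ or b^ω). -/
def tokens {n : ℕ} (C : Fin n → St) : ℕ := cnt C .rw0 + cnt C .rw1 + cnt C .bw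

/-- Number of red agents (state r^ω₀, r^ω₁ or r). -/
def reds {n : ℕ} (C : Fin n → St) : ℕ := cnt C .rw0 + cnt C .rw1 + cnt C .r

/-- Number of blue agents (state b^ω or b). -/
def blues {n : ℕ} (C : Fin n → St) : ℕ := cnt C .bw + cnt C .b

/-!
Every rule conserves the weighted count `#r - #b - 2·#b^ω`, which is `0` initially. With no
tokens all agents are `r` or `b`, hence `#r = #b = n/2`. With a single token, either it is red and
`#r = #b`, or it is `b^ω` and `#r = #b + 2`; in both cases `#red = #blue + 1`.
-/

def weight : St → ℤ
  | .r => 1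
  | .b => -1
  | .bw => -2
  | _ => 0

theorem weight_delta (p q : St) :
    weight (delta p q).1 + weight (delta p q).2 = weight p + weight q := by
  cases p <;> cases q <;> rfl

theorem Finset.sum_update_univ {ι M : Type*} [Fintype ι] [DecidableEq ι] [AddCommGroup M]
    (f : ι → M) (i : ι) (x : M) :
    ∑ a, Function.update f i x a = ∑ a, f a - f i + x := by
  rw [Finset.sum_update_of_mem (Finset.mem_univ i), Finset.sdiff_singleton_eq_erase,
    ← Finset.add_sum_erase _ f (Finset.mem_univ i)]
  abel

section Conservation

variable {M : Type*} [AddCommGroup M] {φ : St → M}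
  (hφ : ∀ p q, φ (delta p q).1 + φ (delta p q).2 = φ p + φ q)
include hφ

theorem Step.sum_comp_eq {n : ℕ} {C C' : Fin n → St} (h : Step C C') :
    ∑ a, φ (C' a) = ∑ a, φ (C a) := by
  obtain ⟨i, j, hij, rfl⟩ := h
  change ∑ a, (φ ∘ _) a = _
  rw [Function.comp_update, Function.comp_update, Finset.sum_update_univ,
    Function.update_of_ne hij.symm, Finset.sum_update_univ]
  simp only [Function.comp_apply]
  rw [show ∀ s a x b y : M, s - a + x - b + y = s + (x + y) - (a + b) by intros; abel, hφ,
    add_sub_cancel_right]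

theorem Relation.ReflTransGen.sum_comp_eq {n : ℕ} {C C' : Fin n → St}
    (h : Relation.ReflTransGen Step C C') : ∑ a, φ (C' a) = ∑ a, φ (C a) := by
  induction h with
  | refl => rfl
  | tail _ hstep ih => rw [hstep.sum_comp_eq hφ, ih]

end Conservation

theorem sum_comp_eq_cnt {n : ℕ} (C : Fin n → St) (φ : St → ℤ) :
    ∑ a, φ (C a) = cnt C .rw0 * φ .rw0 + cnt C .rw1 * φ .rw1 + cnt C .bw * φ .bw +
      cnt C .r * φ .r + cnt C .b * φ .b := by
  simp only [cnt, Finset.natCast_card_filter, Finset.sum_mul, ← Finset.sum_add_distrib]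
  refine Finset.sum_congr rfl fun a _ => ?_
  cases C a <;> simp

theorem cnt_total {n : ℕ} (C : Fin n → St) :
    cnt C .rw0 + cnt C .rw1 + cnt C .bw + cnt C .r + cnt C .b = n := by
  have := sum_comp_eq_cnt C 1
  simp only [Pi.one_apply, mul_one, Finset.sum_const, Finset.card_univ, Fintype.card_fin,
    nsmul_eq_mul] at this
  exact_mod_cast this.symm

theorem cnt_r_eq_of_reachable {n : ℕ} {C : Fin n → St}
    (hreach : Relation.ReflTransGen Step (fun _ => St.rw0) C) :
    cnt C .r = cnt C .b + 2 * cnt C .bw := by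
  have := hreach.sum_comp_eq weight_delta
  rw [sum_comp_eq_cnt C] at this
  simp only [weight, Finset.sum_const_zero] at this
  omega

theorem stmt8 (n : ℕ) (C : Fin n → St)
    (hreach : Relation.ReflTransGen Step (fun _ => St.rw0) C) :
    (Even n → tokens C = 0 → reds C = n / 2 ∧ blues C = n / 2) ∧
    (Odd n → tokens C = 1 → reds C = blues C + 1) := by
  have hinv := cnt_r_eq_of_reachable hreach
  have htotal := cnt_total C
  unfold tokens reds blues
  constructor <;> intro _ _ <;> omega
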